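/- Let q be a multiplicatively idempotent ultrafilter on ℕ (q ⊙ q = q) and p any ultrafilter on ℕ. Then E₁(p, q) = E₁(E₁(p, q), q). -/
import Mathlib


/-- `E₁(p,q)`: `A ∈ E₁(p,q) ↔ {x | {y | x^y ∈ A} ∈ q} ∈ p`. -/
def E1 (p q : Ultrafilter ℕ) : Ultrafilter ℕ := p.bind fun n => q.map fun m => n ^ m

/-- `E₂(p,q)`: `A ∈ E₂(p,q) ↔ {x | {y | y^x ∈ A} ∈ q} ∈ p`. -/
def E2 (p q : Ultrafilter ℕ) : Ultrafilter ℕ := p.bind fun n => q.map fun m => m ^ n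

/-- Ultrafilter product: `A ∈ u ⊙ v ↔ {x | {y | x·y ∈ A} ∈ v} ∈ u`. -/
def umul (u v : Ultrafilter ℕ) : Ultrafilter ℕ := u.bind fun x => v.map fun y => x * y

lemma mem_ubind (f : Ultrafilter ℕ) (m : ℕ → Ultrafilter ℕ) (A : Set ℕ) :
    A ∈ f.bind m ↔ {x | A ∈ m x} ∈ f := Iff.rfl

lemma E1_assoc (p q r : Ultrafilter ℕ) : E1 (E1 p q) r = E1 p (umul q r) := by
  ext A
  simp only [E1, umul, mem_ubind, Ultrafilter.mem_map]
  have : ∀ x : ℕ, ((fun m => x ^ m) ⁻¹' {n | (fun m => n ^ m) ⁻¹' A ∈ r})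
      = {a | (fun y => a * y) ⁻¹' ((fun m => x ^ m) ⁻¹' A) ∈ r} := by
    intro x; ext a
    simp only [Set.mem_preimage, Set.mem_setOf_eq]
    congr! 1
    ext m; simp [pow_mul]
  simp only [this]

theorem stmt11 (p q : Ultrafilter ℕ) (hq : umul q q = q) :
    E1 p q = E1 (E1 p q) q := by
  rw [E1_assoc, hq]
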